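/- Let μ > 0 and λ be real constants with λ + 2μ > 0 (so that λ + 3μ > 0), and set c := (λ+μ)/(λ+3μ). Let U ⊆ ℝ² be open and let u : U → ℝ² be smooth with 𝓛₀u := μΔu + (λ+μ)∇(div u) = 0 on U, and suppose u(x) = 0 for every x ∈ U with x₁ = 0. Define W_u(x) := c x₁² Δu(x) + 2c x₁ (∂₂u₂(x), −∂₂u₁(x)). Then at every point (0,t) ∈ U one has ∂₁²(W_u)(0,t) = (−2 ∂₁²u₁(0,t), 2 ∂₁²u₂(0,t)). -/

import Mathlib

noncomputable section

open Real

/-- The Euclidean plane. -/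
abbrev E2 : Type := EuclideanSpace ℝ (Fin 2)

/-- Partial derivative `∂ᵢf` (with `i = 0` corresponding to `∂₁`). -/
noncomputable def pd (i : Fin 2) (f : E2 → ℝ) (x : E2) : ℝ :=
  fderiv ℝ f x (EuclideanSpace.single i 1)

/-- Laplacian of a scalar function. -/
noncomputable def lap (f : E2 → ℝ) (x : E2) : ℝ :=
  pd 0 (pd 0 f) x + pd 1 (pd 1 f) x

/-- Divergence `div u = ∂₁u₁ + ∂₂u₂`. -/
noncomputable def divg (u : E2 → Fin 2 → ℝ) (x : E2) : ℝ :=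
  pd 0 (fun y => u y 0) x + pd 1 (fun y => u y 1) x

/-- The Lamé operator `𝓛₀u = μΔu + (λ+μ)∇(div u)`, `i`-th component. -/
noncomputable def lame (μ lam : ℝ) (u : E2 → Fin 2 → ℝ) (x : E2) (i : Fin 2) : ℝ :=
  μ * lap (fun y => u y i) x + (lam + μ) * pd i (divg u) x

namespace Helper

lemma pd_congr {f g : E2 → ℝ} {x : E2} (i : Fin 2) (h : f =ᶠ[nhds x] g) :
    pd i f x = pd i g x := by
  simp [pd, h.fderiv_eq]

lemma contDiffAt_pd {f : E2 → ℝ} {x : E2} (i : Fin 2) (hf : ContDiffAt ℝ (⊤ : ℕ∞) f x) :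
    ContDiffAt ℝ (⊤ : ℕ∞) (pd i f) x := by
  have h1 : ContDiffAt ℝ (⊤ : ℕ∞) (fderiv ℝ f) x := hf.fderiv_right (by simp)
  exact h1.clm_apply contDiffAt_const

lemma pd_add {f g : E2 → ℝ} {x : E2} (i : Fin 2)
    (hf : DifferentiableAt ℝ f x) (hg : DifferentiableAt ℝ g x) :
    pd i (fun y => f y + g y) x = pd i f x + pd i g x := by
  simp [pd, fderiv_fun_add hf hg]

lemma pd_mul {f g : E2 → ℝ} {x : E2} (i : Fin 2)
    (hf : DifferentiableAt ℝ f x) (hg : DifferentiableAt ℝ g x) :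
    pd i (fun y => f y * g y) x = f x * pd i g x + g x * pd i f x := by
  simp [pd, fderiv_fun_mul hf hg]

lemma pd_const_mul {f : E2 → ℝ} {x : E2} (i : Fin 2) (a : ℝ)
    (hf : DifferentiableAt ℝ f x) :
    pd i (fun y => a * f y) x = a * pd i f x := by
  simp [pd, fderiv_const_mul hf a]

lemma diff_proj (j : Fin 2) (x : E2) : DifferentiableAt ℝ (fun y : E2 => y j) x :=
  (EuclideanSpace.proj j : E2 →L[ℝ] ℝ).differentiableAt

lemma pd_proj (i j : Fin 2) (x : E2) :
    pd i (fun y : E2 => y j) x = if j = i then 1 else 0 := by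
  have : pd i (fun y : E2 => y j) x
      = fderiv ℝ (EuclideanSpace.proj j : E2 →L[ℝ] ℝ) x (EuclideanSpace.single i 1) := rfl
  rw [this, (EuclideanSpace.proj j : E2 →L[ℝ] ℝ).fderiv]
  simp [EuclideanSpace.single_apply]

lemma pd_comm {f : E2 → ℝ} {x : E2} (hf : ContDiffAt ℝ (⊤ : ℕ∞) f x) (i j : Fin 2) :
    pd i (pd j f) x = pd j (pd i f) x := by
  have hdf : DifferentiableAt ℝ (fderiv ℝ f) x :=
    (hf.fderiv_right (m := 1) (WithTop.coe_le_coe.mpr le_top)).differentiableAt one_ne_zero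
  have key : ∀ a b : Fin 2, pd a (pd b f) x
      = fderiv ℝ (fderiv ℝ f) x (EuclideanSpace.single a 1) (EuclideanSpace.single b 1) := by
    intro a b
    have : pd b f = fun y => (fderiv ℝ f y) (EuclideanSpace.single b 1) := rfl
    rw [show pd a (pd b f) x
        = fderiv ℝ (fun y => (fderiv ℝ f y) (EuclideanSpace.single b 1)) x
            (EuclideanSpace.single a 1) from rfl,
      fderiv_clm_apply hdf (differentiableAt_const _)]
    simp
  rw [key, key]
  exact hf.isSymmSndFDerivAt (by simp; exact WithTop.coe_le_coe.mpr (le_top : (2 : ℕ∞) ≤ ⊤)) _ _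

lemma tangential {U : Set E2} (hU : IsOpen U) {f : E2 → ℝ} {x : E2} (hx : x ∈ U)
    (hx0 : x 0 = 0) (hf : DifferentiableAt ℝ f x)
    (h0 : ∀ y ∈ U, y 0 = 0 → f y = 0) : pd 1 f x = 0 := by
  have hγ : HasDerivAt (fun t : ℝ => x + t • (EuclideanSpace.single 1 1 : E2))
      (EuclideanSpace.single 1 1 : E2) 0 := by
    simpa using ((hasDerivAt_id (0:ℝ)).smul_const (EuclideanSpace.single 1 1 : E2)).const_add x
  have hfx : HasFDerivAt f (fderiv ℝ f x) (x + (0:ℝ) • (EuclideanSpace.single 1 1 : E2)) := by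
    simpa using hf.hasFDerivAt
  have hcomp : HasDerivAt (fun t : ℝ => f (x + t • (EuclideanSpace.single 1 1 : E2)))
      (fderiv ℝ f x (EuclideanSpace.single 1 1)) 0 := by
    have h := hfx.comp_hasDerivAt (0:ℝ) hγ
    exact h
  have hev : (fun t : ℝ => f (x + t • (EuclideanSpace.single 1 1 : E2))) =ᶠ[nhds 0]
      fun _ => 0 := by
    have hcont : Continuous fun t : ℝ => x + t • (EuclideanSpace.single 1 1 : E2) :=
      continuous_const.add (continuous_id.smul continuous_const)
    have hmem : ∀ᶠ t in nhds (0:ℝ), x + t • (EuclideanSpace.single 1 1 : E2) ∈ U := by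
      have hx' : x + (0:ℝ) • (EuclideanSpace.single 1 1 : E2) ∈ U := by simpa using hx
      exact hcont.continuousAt.preimage_mem_nhds (hU.mem_nhds hx')
    filter_upwards [hmem] with t ht
    refine h0 _ ht ?_
    have : (x + t • (EuclideanSpace.single 1 1 : E2)) 0
        = x 0 + t * (EuclideanSpace.single 1 1 : E2) 0 := rfl
    rw [this, hx0, EuclideanSpace.single_apply]
    norm_num
  have hzero : HasDerivAt (fun t : ℝ => f (x + t • (EuclideanSpace.single 1 1 : E2))) 0 0 :=
    (hasDerivAt_const (0:ℝ) (0:ℝ)).congr_of_eventuallyEq hev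
  exact hcomp.unique hzero

lemma key {U : Set E2} (hU : IsOpen U) {x : E2} (hx : x ∈ U) (hx0 : x 0 = 0)
    (c k : ℝ) {P Q : E2 → ℝ}
    (hP : ∀ y ∈ U, ContDiffAt ℝ (⊤ : ℕ∞) P y) (hQ : ∀ y ∈ U, ContDiffAt ℝ (⊤ : ℕ∞) Q y) :
    pd 0 (pd 0 (fun y => c * (y 0 * y 0) * P y + k * y 0 * Q y)) x
      = 2 * c * P x + 2 * k * pd 0 Q x := by
  have dproj : ∀ y : E2, DifferentiableAt ℝ (fun z : E2 => z 0) y := fun y => diff_proj 0 y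
  have pdproj : ∀ y : E2, pd 0 (fun z : E2 => z 0) y = 1 := by
    intro y; rw [pd_proj]; simp
  have dP : ∀ y ∈ U, DifferentiableAt ℝ P y := fun y hy => (hP y hy).differentiableAt (by simp)
  have dQ : ∀ y ∈ U, DifferentiableAt ℝ Q y := fun y hy => (hQ y hy).differentiableAt (by simp)
  have dP' : ∀ y ∈ U, DifferentiableAt ℝ (pd 0 P) y := fun y hy =>
    (contDiffAt_pd 0 (hP y hy)).differentiableAt (by simp)
  have dQ' : ∀ y ∈ U, DifferentiableAt ℝ (pd 0 Q) y := fun y hy =>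
    (contDiffAt_pd 0 (hQ y hy)).differentiableAt (by simp)
  have dsq : ∀ y : E2, DifferentiableAt ℝ (fun z : E2 => z 0 * z 0) y := fun y =>
    (dproj y).mul (dproj y)
  have pdsq : ∀ y : E2, pd 0 (fun z : E2 => z 0 * z 0) y = y 0 + y 0 := by
    intro y; rw [pd_mul 0 (dproj y) (dproj y), pdproj]; ring
  have dA : ∀ y : E2, DifferentiableAt ℝ (fun z : E2 => c * (z 0 * z 0)) y := fun y =>
    (dsq y).const_mul c
  have pdA : ∀ y : E2, pd 0 (fun z : E2 => c * (z 0 * z 0)) y = c * (y 0 + y 0) := by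
    intro y; rw [pd_const_mul 0 c (dsq y), pdsq]
  have dB : ∀ y : E2, DifferentiableAt ℝ (fun z : E2 => k * z 0) y := fun y =>
    (dproj y).const_mul k
  have pdB : ∀ y : E2, pd 0 (fun z : E2 => k * z 0) y = k := by
    intro y; rw [pd_const_mul 0 k (dproj y), pdproj]; ring
  -- step 1: first derivative on U
  have step1 : ∀ y ∈ U, pd 0 (fun z => c * (z 0 * z 0) * P z + k * z 0 * Q z) y
      = c * (y 0 * y 0) * pd 0 P y + c * (y 0 + y 0) * P y
        + (k * y 0 * pd 0 Q y + k * Q y) := by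
    intro y hy
    rw [pd_add 0 ((dA y).fun_mul (dP y hy)) ((dB y).fun_mul (dQ y hy)),
      pd_mul 0 (dA y) (dP y hy), pd_mul 0 (dB y) (dQ y hy), pdA, pdB]
    ring
  have hev : pd 0 (fun z => c * (z 0 * z 0) * P z + k * z 0 * Q z) =ᶠ[nhds x]
      (fun y => c * (y 0 * y 0) * pd 0 P y + c * (y 0 + y 0) * P y
        + (k * y 0 * pd 0 Q y + k * Q y)) :=
    Filter.eventually_of_mem (hU.mem_nhds hx) step1
  rw [pd_congr 0 hev]
  -- step 2: differentiate the expression at x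
  have d1 : DifferentiableAt ℝ (fun y : E2 => c * (y 0 * y 0) * pd 0 P y) x :=
    (dA x).mul (dP' x hx)
  have dC : DifferentiableAt ℝ (fun y : E2 => c * (y 0 + y 0)) x :=
    ((dproj x).add (dproj x)).const_mul c
  have pdC : pd 0 (fun y : E2 => c * (y 0 + y 0)) x = c * 2 := by
    rw [pd_const_mul 0 c ((dproj x).fun_add (dproj x)), pd_add 0 (dproj x) (dproj x), pdproj]; ring
  have d2 : DifferentiableAt ℝ (fun y : E2 => c * (y 0 + y 0) * P y) x :=
    dC.mul (dP x hx)
  have d3 : DifferentiableAt ℝ (fun y : E2 => k * y 0 * pd 0 Q y) x :=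
    (dB x).mul (dQ' x hx)
  have d4 : DifferentiableAt ℝ (fun y : E2 => k * Q y) x := (dQ x hx).const_mul k
  rw [pd_add 0 (d1.fun_add d2) (d3.fun_add d4), pd_add 0 d1 d2, pd_add 0 d3 d4,
    pd_mul 0 (dA x) (dP' x hx), pd_mul 0 dC (dP x hx), pd_mul 0 (dB x) (dQ' x hx),
    pd_const_mul 0 k (dQ x hx), pdA, pdB, pdC]
  rw [hx0]
  ring

end Helper

/-- If a smooth solution of `𝓛₀u = 0` on an open set `U ⊆ ℝ²` vanishes on `U ∩ {x₁ = 0}`,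
then for `W_u(x) = c x₁² Δu(x) + 2c x₁ (∂₂u₂(x), −∂₂u₁(x))` with `c = (λ+μ)/(λ+3μ)`,
at every point `(0,t) ∈ U` one has `∂₁²(W_u)(0,t) = (−2 ∂₁²u₁(0,t), 2 ∂₁²u₂(0,t))`. -/
theorem W_second_derivative_on_line
    (μ lam c : ℝ) (hμ : 0 < μ) (hlam : 0 < lam + 2 * μ)
    (hc : c = (lam + μ) / (lam + 3 * μ))
    (U : Set E2) (hU : IsOpen U)
    (u : E2 → Fin 2 → ℝ) (hu : ContDiffOn ℝ (⊤ : ℕ∞) u U)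
    (hlame : ∀ x ∈ U, ∀ i : Fin 2, lame μ lam u x i = 0)
    (hbc : ∀ x ∈ U, x 0 = 0 → ∀ i : Fin 2, u x i = 0)
    (W : E2 → Fin 2 → ℝ)
    (hW0 : ∀ x : E2,
      W x 0 = c * (x 0) ^ 2 * lap (fun y => u y 0) x + 2 * c * x 0 * pd 1 (fun y => u y 1) x)
    (hW1 : ∀ x : E2,
      W x 1 = c * (x 0) ^ 2 * lap (fun y => u y 1) x - 2 * c * x 0 * pd 1 (fun y => u y 0) x) :
    ∀ x ∈ U, x 0 = 0 →
      pd 0 (pd 0 (fun y => W y 0)) x = -2 * pd 0 (pd 0 (fun y => u y 0)) x ∧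
        pd 0 (pd 0 (fun y => W y 1)) x = 2 * pd 0 (pd 0 (fun y => u y 1)) x := by
  intro x hx hx0
  have h3 : lam + 3 * μ ≠ 0 := by nlinarith
  have hC : ∀ i : Fin 2, ∀ y ∈ U, ContDiffAt ℝ (⊤ : ℕ∞) (fun z => u z i) y := by
    intro i y hy
    exact ((contDiffOn_pi.mp hu) i).contDiffAt (hU.mem_nhds hy)
  have dC : ∀ i : Fin 2, ∀ y ∈ U, DifferentiableAt ℝ (fun z => u z i) y := fun i y hy =>
    (hC i y hy).differentiableAt (by simp)
  have T1 : ∀ i : Fin 2, ∀ y ∈ U, y 0 = 0 → pd 1 (fun z => u z i) y = 0 := by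
    intro i y hy hy0
    exact Helper.tangential hU hy hy0 (dC i y hy) (fun z hz hz0 => hbc z hz hz0 i)
  have T2 : ∀ i : Fin 2, pd 1 (pd 1 (fun z => u z i)) x = 0 := by
    intro i
    exact Helper.tangential hU hx hx0
      ((Helper.contDiffAt_pd 1 (hC i x hx)).differentiableAt (by simp))
      (fun z hz hz0 => T1 i z hz hz0)
  -- differentiability of first partials
  have dpd : ∀ (j i : Fin 2), ∀ y ∈ U, DifferentiableAt ℝ (pd j (fun z => u z i)) y :=
    fun j i y hy => (Helper.contDiffAt_pd j (hC i y hy)).differentiableAt (by simp)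
  -- divergence derivatives
  have hdivg : divg u = fun y => pd 0 (fun z => u z 0) y + pd 1 (fun z => u z 1) y := rfl
  have hdiv0 : pd 0 (divg u) x
      = pd 0 (pd 0 (fun z => u z 0)) x + pd 0 (pd 1 (fun z => u z 1)) x := by
    rw [hdivg, Helper.pd_add 0 (dpd 0 0 x hx) (dpd 1 1 x hx)]
  have hdiv1 : pd 1 (divg u) x
      = pd 1 (pd 0 (fun z => u z 0)) x + pd 1 (pd 1 (fun z => u z 1)) x := by
    rw [hdivg, Helper.pd_add 1 (dpd 0 0 x hx) (dpd 1 1 x hx)]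
  -- PDE equations at x
  have eq1 : (lam + 2 * μ) * pd 0 (pd 0 (fun z => u z 0)) x
      + (lam + μ) * pd 0 (pd 1 (fun z => u z 1)) x = 0 := by
    have h := hlame x hx 0
    simp only [lame, lap] at h
    rw [hdiv0, T2 0] at h
    linarith
  have eq2 : μ * pd 0 (pd 0 (fun z => u z 1)) x
      + (lam + μ) * pd 0 (pd 1 (fun z => u z 0)) x = 0 := by
    have h := hlame x hx 1
    simp only [lame, lap] at h
    rw [hdiv1, T2 1, Helper.pd_comm (hC 0 x hx) 1 0] at h
    linarith
  constructor
  · have hW0' : (fun y => W y 0) = fun y =>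
        c * (y 0 * y 0) * lap (fun w => u w 0) y + 2 * c * y 0 * pd 1 (fun w => u w 1) y := by
      funext y; rw [hW0 y]; ring
    have hP : ∀ y ∈ U, ContDiffAt ℝ (⊤ : ℕ∞) (lap (fun w => u w 0)) y := by
      intro y hy
      have : lap (fun w => u w 0)
          = fun z => pd 0 (pd 0 (fun w => u w 0)) z + pd 1 (pd 1 (fun w => u w 0)) z := rfl
      rw [this]
      exact (Helper.contDiffAt_pd 0 (Helper.contDiffAt_pd 0 (hC 0 y hy))).add
        (Helper.contDiffAt_pd 1 (Helper.contDiffAt_pd 1 (hC 0 y hy)))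
    have hQ : ∀ y ∈ U, ContDiffAt ℝ (⊤ : ℕ∞) (pd 1 (fun w => u w 1)) y := fun y hy =>
      Helper.contDiffAt_pd 1 (hC 1 y hy)
    rw [hW0', Helper.key hU hx hx0 c (2 * c) hP hQ]
    have hlapx : lap (fun w => u w 0) x
        = pd 0 (pd 0 (fun w => u w 0)) x + pd 1 (pd 1 (fun w => u w 0)) x := rfl
    rw [hlapx, T2 0, hc]
    linear_combination (4 * (lam + 3 * μ)⁻¹) * eq1
      + (-2 * pd 0 (pd 0 (fun w => u w 0)) x) * mul_inv_cancel₀ h3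
  · have hW1' : (fun y => W y 1) = fun y =>
        c * (y 0 * y 0) * lap (fun w => u w 1) y + -(2 * c) * y 0 * pd 1 (fun w => u w 0) y := by
      funext y; rw [hW1 y]; ring
    have hP : ∀ y ∈ U, ContDiffAt ℝ (⊤ : ℕ∞) (lap (fun w => u w 1)) y := by
      intro y hy
      have : lap (fun w => u w 1)
          = fun z => pd 0 (pd 0 (fun w => u w 1)) z + pd 1 (pd 1 (fun w => u w 1)) z := rfl
      rw [this]
      exact (Helper.contDiffAt_pd 0 (Helper.contDiffAt_pd 0 (hC 1 y hy))).add
        (Helper.contDiffAt_pd 1 (Helper.contDiffAt_pd 1 (hC 1 y hy)))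
    have hQ : ∀ y ∈ U, ContDiffAt ℝ (⊤ : ℕ∞) (pd 1 (fun w => u w 0)) y := fun y hy =>
      Helper.contDiffAt_pd 1 (hC 0 y hy)
    rw [hW1', Helper.key hU hx hx0 c (-(2 * c)) hP hQ]
    have hlapx : lap (fun w => u w 1) x
        = pd 0 (pd 0 (fun w => u w 1)) x + pd 1 (pd 1 (fun w => u w 1)) x := rfl
    rw [hlapx, T2 1, hc]
    linear_combination (-4 * (lam + 3 * μ)⁻¹) * eq2
      + (2 * pd 0 (pd 0 (fun w => u w 1)) x) * mul_inv_cancel₀ h3
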